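/- arXiv:1203.3780 — 2 statements merged into one kernel-verified Lean document; each statement's English description precedes it below -/
import Mathlib

section
/- Let (W,S) be a Coxeter system, w ∈ W, and i = (α_1,…,α_l) a reduced word for w. Then for every y ∈ W with y ≤ w in the Bruhat order there exists a unique left positive subset D ⊆ {1,…,l} for i such that w(i)^D = y. -/
open CoxeterSystem List

namespace QSC

variable {B W : Type*} [Group W] {M : CoxeterMatrix B} (cs : CoxeterSystem M W)

local prefix:100 "s" => cs.simple
local prefix:100 "π" => cs.wordProd
local prefix:100 "ℓ" => cs.length
local prefix:100 "ris" => cs.rightInvSeq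
local prefix:100 "lis" => cs.leftInvSeq

private lemma conj_eq_iff (a x y : W) : (a * x * a⁻¹ = y) ↔ (x = a⁻¹ * y * a) := by
  constructor <;> rintro rfl <;> group

private lemma zmod_one_add_one : (1 : ZMod 2) + 1 = 0 := by decide

open Classical in
/-- The permutation of `W × ZMod 2` associated to a simple reflection. -/
noncomputable def toggle (i : B) : Equiv.Perm (W × ZMod 2) :=
  Function.Involutive.toPerm
    (fun p => (s i * p.1 * s i, p.2 + if p.1 = s i then 1 else 0))
    (by
      rintro ⟨t, ε⟩
      have h2 : (s i * t * s i = s i) ↔ (t = s i) := by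
        constructor
        · intro h
          have := congrArg (fun x => s i * x * s i) h
          simp only [mul_assoc, cs.simple_mul_simple_cancel_left, mul_one,
            cs.simple_mul_simple_self] at this
          simpa [← mul_assoc, cs.simple_mul_simple_self] using this
        · rintro rfl; rw [cs.simple_mul_simple_self, one_mul]
      simp only [Prod.mk.injEq, h2]
      constructor
      · simp [mul_assoc, cs.simple_mul_simple_cancel_left, cs.simple_mul_simple_self]
      · by_cases h : t = s i
        · rw [if_pos h, add_assoc, zmod_one_add_one, add_zero]
        · rw [if_neg h, add_zero, add_zero]
      )

open Classical in
lemma toggle_apply (i : B) (t : W) (ε : ZMod 2) :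
    toggle cs i (t, ε) = (s i * t * s i, ε + if t = s i then 1 else 0) := rfl

lemma simple_conj_simple (i j : B) :
    s j * (s i * s j) * s j = (s i * s j)⁻¹ := by
  rw [mul_inv_rev, cs.inv_simple, cs.inv_simple]
  simp [mul_assoc, cs.simple_mul_simple_self]

lemma conj_simple_pow (i j : B) (n : ℕ) :
    s j * (s i * s j) ^ n * s j = ((s i * s j) ^ n)⁻¹ := by
  induction n with
  | zero => simp [cs.simple_mul_simple_self]
  | succ n ih =>
    have hsplit : s j * (s i * s j) ^ (n + 1) * s j
        = (s j * (s i * s j) ^ n * s j) * (s j * (s i * s j) * s j) := by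
      rw [pow_succ]
      simp [mul_assoc, cs.simple_mul_simple_cancel_left]
    rw [hsplit, ih, simple_conj_simple cs, ← mul_inv_rev, ← pow_succ']

private lemma conj_eq_iff' (a x y : W) : (a * x * a = y) ↔ (x = a⁻¹ * y * a⁻¹) := by
  constructor
  · rintro rfl; group
  · rintro rfl; group

lemma simple_comm_pow (i j : B) :
    s j * (s i * s j) = (s i * s j)⁻¹ * s j := by
  rw [mul_inv_rev, cs.inv_simple, cs.inv_simple, ← mul_assoc]

open Classical in
lemma toggle_pow_apply (i j : B) (m : ℕ) (t : W) (ε : ZMod 2) :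
    ((toggle cs i * toggle cs j) ^ m) (t, ε) =
      ((s i * s j) ^ m * t * ((s i * s j) ^ m)⁻¹,
        ε + ∑ n ∈ Finset.range (2 * m),
          (if t = ((s i * s j) ^ n)⁻¹ * s j then (1 : ZMod 2) else 0)) := by
  induction m generalizing t ε with
  | zero => simp
  | succ m ih =>
    rw [pow_succ, Equiv.Perm.mul_apply, Equiv.Perm.mul_apply,
      toggle_apply, toggle_apply, ih]
    have hconj : s i * (s j * t * s j) * s i = (s i * s j) * t * (s i * s j)⁻¹ := by
      rw [mul_inv_rev, cs.inv_simple, cs.inv_simple]; group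
    simp only [Prod.mk.injEq]
    constructor
    · -- first coordinate
      rw [hconj, pow_succ]
      group
    · -- second coordinate
      have e0 : (s j * t * s j = s i) ↔ (t = ((s i * s j) ^ 1)⁻¹ * s j) := by
        rw [conj_eq_iff']
        have hl : (s j)⁻¹ * s i * (s j)⁻¹ = ((s i * s j) ^ 1)⁻¹ * s j := by
          simp [pow_one, mul_inv_rev, cs.inv_simple, mul_assoc]
        rw [hl]
      have e2 : ∀ n : ℕ, (s i * (s j * t * s j) * s i = ((s i * s j) ^ n)⁻¹ * s j)
          ↔ (t = ((s i * s j) ^ (n + 1 + 1))⁻¹ * s j) := by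
        intro n
        rw [hconj, conj_eq_iff]
        have key : (s i * s j)⁻¹ * (((s i * s j) ^ n)⁻¹ * s j) * (s i * s j)
            = ((s i * s j) ^ (n + 1 + 1))⁻¹ * s j := by
          have h1 : ((s i * s j) ^ (n + 1 + 1))⁻¹
              = (s i * s j)⁻¹ * ((s i * s j) ^ n)⁻¹ * (s i * s j)⁻¹ := by
            have h2 : (s i * s j) ^ (n + 1 + 1)
                = (s i * s j) * (s i * s j) ^ n * (s i * s j) := by
              rw [pow_succ, pow_succ']
            rw [h2, mul_inv_rev (s i * s j * (s i * s j) ^ n) (s i * s j),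
              mul_inv_rev (s i * s j) ((s i * s j) ^ n), ← mul_assoc]
          rw [h1]
          simp only [mul_assoc]
          rw [simple_comm_pow cs i j]
        rw [key]
      rw [Finset.sum_congr rfl (fun n _ => by rw [e2 n])]
      have hr : 2 * (m + 1) = (2 * m + 1) + 1 := by ring
      rw [hr, Finset.sum_range_succ', Finset.sum_range_succ']
      simp only [← e0, pow_zero, inv_one, one_mul]
      ring

lemma toggle_liftable : M.IsLiftable (fun i => (toggle cs i : Equiv.Perm (W × ZMod 2))) := by
  classical
  intro i j
  rcases Nat.eq_zero_or_pos (M i j) with h | _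
  · rw [h, pow_zero]
  · refine Equiv.ext fun x => ?_
    obtain ⟨t, ε⟩ := x
    rw [toggle_pow_apply]
    have hp : (cs.simple i * cs.simple j) ^ (M i j) = 1 := cs.simple_mul_simple_pow i j
    have h1 : (1 : Equiv.Perm (W × ZMod 2)) (t, ε) = (t, ε) := rfl
    rw [h1]
    simp only [Prod.mk.injEq]
    constructor
    · rw [hp]; group
    · have hper : ∀ n : ℕ,
          ((cs.simple i * cs.simple j) ^ (M i j + n))⁻¹
            = ((cs.simple i * cs.simple j) ^ n)⁻¹ := by
        intro n; rw [pow_add, hp, one_mul]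
      rw [two_mul, Finset.sum_range_add]
      simp only [hper]
      rw [← Finset.sum_add_distrib]
      have hss : ∀ x : ZMod 2, x + x = 0 := by decide
      rw [Finset.sum_congr rfl (fun n _ => hss _), Finset.sum_const_zero, add_zero]

/-- The parity representation of `W` on `W × ZMod 2`. -/
noncomputable def theta : W →* Equiv.Perm (W × ZMod 2) :=
  cs.lift ⟨fun i => toggle cs i, toggle_liftable cs⟩

lemma theta_simple (i : B) : theta cs (s i) = toggle cs i :=
  cs.lift_apply_simple (toggle_liftable cs) i

open Classical in
/-- Sum of indicators of occurrences of `t` in a list. -/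
noncomputable def indSum (l : List W) (t : W) : ZMod 2 :=
  (l.map fun x => if x = t then (1 : ZMod 2) else 0).sum

open Classical in
lemma indSum_nil (t : W) : indSum ([] : List W) t = 0 := rfl

open Classical in
lemma indSum_cons (a : W) (l : List W) (t : W) :
    indSum (a :: l) t = (if a = t then (1 : ZMod 2) else 0) + indSum l t := by
  simp [indSum]

lemma indSum_append (l l' : List W) (t : W) :
    indSum (l ++ l') t = indSum l t + indSum l' t := by
  simp [indSum]

lemma indSum_reverse (l : List W) (t : W) : indSum l.reverse t = indSum l t := by
  classical
  simp [indSum, List.sum_reverse]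

open Classical in
lemma indSum_conj_map (l : List W) (a b t : W) :
    indSum (l.map fun x => a * x * b) t = indSum l (a⁻¹ * t * b⁻¹) := by
  simp only [indSum, List.map_map]
  congr 1
  apply List.map_congr_left
  intro x _
  have hiff : (a * x * b = t) ↔ (x = a⁻¹ * t * b⁻¹) := by
    constructor
    · rintro rfl; group
    · rintro rfl; group
  simp only [Function.comp_apply, hiff]

lemma mem_of_indSum_ne_zero {l : List W} {t : W} (h : indSum l t ≠ 0) : t ∈ l := by
  classical
  induction l with
  | nil => simp [indSum_nil] at h
  | cons a l ih =>
    rw [indSum_cons] at h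
    by_cases ha : a = t
    · exact ha ▸ List.mem_cons_self (a := a) (l := l)
    · rw [if_neg ha, zero_add] at h
      exact List.mem_cons_of_mem a (ih h)

open Classical in
lemma theta_wordProd_apply (ω : List B) (t : W) (ε : ZMod 2) :
    theta cs (π ω) (t, ε) = (π ω * t * (π ω)⁻¹, ε + indSum (ris ω) t) := by
  induction ω generalizing ε with
  | nil => simp [indSum_nil]
  | cons i ω ih =>
    rw [cs.wordProd_cons, map_mul, Equiv.Perm.mul_apply, ih, theta_simple, toggle_apply]
    have hris : ris (i :: ω) = ((π ω)⁻¹ * s i * π ω) :: ris ω := rfl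
    rw [hris, indSum_cons]
    simp only [Prod.mk.injEq]
    constructor
    · rw [mul_inv_rev, cs.inv_simple]; group
    · have hiff : (π ω * t * (π ω)⁻¹ = s i) ↔ ((π ω)⁻¹ * s i * π ω = t) := by
        constructor
        · intro h; rw [← h]; group
        · intro h; rw [← h]; group
      rw [hiff]; ring

lemma indSum_ris_eq_of_wordProd_eq {ω ω' : List B} (h : π ω = π ω') (t : W) :
    indSum (ris ω) t = indSum (ris ω') t := by
  have h1 := theta_wordProd_apply cs ω t 0
  have h2 := theta_wordProd_apply cs ω' t 0
  rw [h] at h1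
  rw [h1] at h2
  have h3 := congrArg Prod.snd h2
  simpa using h3

lemma leftInvSeq_eq_map (ω : List B) :
    lis ω = (ris ω).map fun x => π ω * x * (π ω)⁻¹ := by
  induction ω with
  | nil => simp
  | cons i ω ih =>
    have hlis : lis (i :: ω) = s i :: (lis ω).map (MulAut.conj (s i)) := rfl
    have hris : ris (i :: ω) = ((π ω)⁻¹ * s i * π ω) :: ris ω := rfl
    rw [hlis, hris, ih]
    simp only [List.map_cons, List.map_map, cs.wordProd_cons, List.cons.injEq]
    constructor
    · rw [mul_inv_rev, cs.inv_simple]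
      simp [mul_assoc, cs.simple_mul_simple_cancel_left]
    · apply List.map_congr_left
      intro x _
      simp only [Function.comp_apply, MulAut.conj_apply, mul_inv_rev, cs.inv_simple]
      group

lemma rightInvSeq_append (φ χ : List B) :
    ris (φ ++ χ) = ((ris φ).map fun x => (π χ)⁻¹ * x * π χ) ++ ris χ := by
  induction φ with
  | nil => simp
  | cons i φ ih =>
    have h1 : ris ((i :: φ) ++ χ) = ((π (φ ++ χ))⁻¹ * s i * π (φ ++ χ)) :: ris (φ ++ χ) := rfl
    have h2 : ris (i :: φ) = ((π φ)⁻¹ * s i * π φ) :: ris φ := rfl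
    rw [h1, h2, ih, List.map_cons, cs.wordProd_append]
    simp only [List.cons_append, List.cons.injEq]
    exact ⟨by rw [mul_inv_rev]; group, trivial⟩

/-- For any reflection `t` there is a word representing `t` in which
`t` occurs an odd number of times in the right inversion sequence. -/
lemma exists_word_indSum_one {t : W} (ht : cs.IsReflection t) :
    ∃ ξ : List B, π ξ = t ∧ indSum (ris ξ) t = 1 := by
  classical
  obtain ⟨v, i, rfl⟩ := ht
  obtain ⟨b, hb⟩ := cs.wordProd_surjective v⁻¹
  refine ⟨b.reverse ++ (i :: b), ?_, ?_⟩
  · rw [cs.wordProd_append, cs.wordProd_reverse, cs.wordProd_cons, hb]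
    group
  · rw [rightInvSeq_append, indSum_append, indSum_conj_map]
    have hπ : π (i :: b) = s i * v⁻¹ := by rw [cs.wordProd_cons, hb]
    have hrisc : ris (i :: b) = ((π b)⁻¹ * s i * π b) :: ris b := rfl
    have hhead : (π b)⁻¹ * s i * π b = v * s i * v⁻¹ := by rw [hb]; group
    rw [hrisc, hhead, indSum_cons, if_pos rfl]
    have hconj : (π (i :: b))⁻¹⁻¹ * (v * s i * v⁻¹) * (π (i :: b))⁻¹ = s i := by
      rw [hπ, inv_inv, mul_inv_rev, inv_inv, cs.inv_simple]
      calc s i * v⁻¹ * (v * s i * v⁻¹) * (v * s i)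
          = s i * (s i * (v⁻¹ * v)) * (v⁻¹ * v) * s i := by group
        _ = s i := by
            rw [inv_mul_cancel]
            simp [cs.simple_mul_simple_cancel_left, cs.simple_mul_simple_self]
    rw [hconj]
    have hrev : cs.rightInvSeq b.reverse = (cs.leftInvSeq b).reverse :=
      cs.rightInvSeq_reverse b
    rw [hrev, indSum_reverse, leftInvSeq_eq_map, indSum_conj_map, hb]
    have hv : v⁻¹⁻¹ * s i * v⁻¹⁻¹⁻¹ = v * s i * v⁻¹ := by simp [inv_inv]
    rw [hv]
    have h2 : ∀ x : ZMod 2, x + (1 + x) = 1 := by decide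
    exact h2 _

/-- **Strong exchange property** (right version). -/
lemma strong_exchange_right {t : W} (ht : cs.IsReflection t) {ω : List B}
    (hω : cs.IsReduced ω) (hlt : ℓ (π ω * t) < ℓ (π ω)) :
    ∃ j, j < ω.length ∧ π (ω.eraseIdx j) = π ω * t := by
  classical
  obtain ⟨φ, hφred, hφ⟩ := cs.exists_reduced_word' (π ω * t)
  obtain ⟨ξ, hξ1, hξ2⟩ := exists_word_indSum_one cs ht
  have hprod : π (φ ++ ξ) = π ω := by
    rw [cs.wordProd_append, ← hφ, hξ1, mul_assoc, ht.mul_self, mul_one]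
  have hparity := indSum_ris_eq_of_wordProd_eq cs hprod t
  rw [rightInvSeq_append, indSum_append, indSum_conj_map, hξ1, hξ2] at hparity
  have htt : t⁻¹⁻¹ * t * t⁻¹ = t := by group
  rw [htt] at hparity
  have hφ0 : indSum (ris φ) t = 0 := by
    by_contra h0
    have hmem := mem_of_indSum_ne_zero h0
    have hinv := cs.isRightInversion_of_mem_rightInvSeq hφred hmem
    have h6 := hinv.2
    rw [← hφ, mul_assoc, ht.mul_self, mul_one] at h6
    omega
  rw [hφ0, zero_add] at hparity
  have hne : indSum (ris ω) t ≠ 0 := by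
    rw [← hparity]; decide
  have hmem := mem_of_indSum_ne_zero hne
  obtain ⟨j, hj, hget⟩ := List.getElem_of_mem hmem
  rw [cs.length_rightInvSeq] at hj
  refine ⟨j, hj, ?_⟩
  have hkey := cs.wordProd_mul_getD_rightInvSeq ω j
  rw [List.getD_eq_getElem _ _ (by rw [cs.length_rightInvSeq]; exact hj)] at hkey
  rw [hget] at hkey
  exact hkey.symm

/-- **Strong exchange property** (left version, sublist form). -/
lemma strong_exchange_left {t : W} (ht : cs.IsReflection t) {ω : List B}
    (hω : cs.IsReduced ω) (hlt : ℓ (t * π ω) < ℓ (π ω)) :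
    ∃ ξ : List B, ξ.Sublist ω ∧ ξ.length + 1 = ω.length ∧ π ξ = t * π ω := by
  have hrev : cs.IsReduced ω.reverse := (cs.isReduced_reverse_iff ω).mpr hω
  have hlt' : ℓ (π ω.reverse * t) < ℓ (π ω.reverse) := by
    rw [cs.wordProd_reverse]
    have h1 : (π ω)⁻¹ * t = (t⁻¹ * π ω)⁻¹ := by group
    rw [h1, cs.length_inv, cs.length_inv, ht.inv]
    exact hlt
  obtain ⟨j, hj, hprod⟩ := strong_exchange_right cs ht hrev hlt'
  refine ⟨(ω.reverse.eraseIdx j).reverse, ?_, ?_, ?_⟩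
  · have h1 : (ω.reverse.eraseIdx j).Sublist ω.reverse := List.eraseIdx_sublist _ _
    have h2 := h1.reverse
    rwa [List.reverse_reverse] at h2
  · rw [List.length_reverse]
    rw [List.length_reverse] at hj
    have := List.length_eraseIdx_add_one (l := ω.reverse) (i := j) (by simpa using hj)
    simpa using this
  · rw [cs.wordProd_reverse, hprod, cs.wordProd_reverse]
    rw [mul_inv_rev, inv_inv, ht.inv]

end QSC

-- Part 2: deletion property, chain Bruhat order, subword property
namespace QSC

variable {B W : Type*} [Group W] {M : CoxeterMatrix B} (cs : CoxeterSystem M W)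

local prefix:100 "s" => cs.simple
local prefix:100 "π" => cs.wordProd
local prefix:100 "ℓ" => cs.length

lemma isReduced_tail {β : B} {ψ : List B} (h : cs.IsReduced (β :: ψ)) :
    cs.IsReduced ψ := by
  have := CoxeterSystem.IsReduced.drop (ω := β :: ψ) h (j := 1)
  simpa using this

/-- Deletion property: every word contains a reduced sublist with the same product. -/
lemma exists_reduced_sublist (ω : List B) :
    ∃ ξ : List B, ξ.Sublist ω ∧ cs.IsReduced ξ ∧ π ξ = π ω := by
  induction ω with
  | nil => exact ⟨[], by simp, by simp [CoxeterSystem.IsReduced], rfl⟩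
  | cons i ω ih =>
    obtain ⟨ξ, hsub, hred, hprod⟩ := ih
    rcases cs.length_simple_mul (π ω) i with h | h
    · refine ⟨i :: ξ, hsub.cons₂ i, ?_, ?_⟩
      · show ℓ (π (i :: ξ)) = (i :: ξ).length
        rw [cs.wordProd_cons, hprod, List.length_cons, h]
        rw [← hprod, hred]
      · rw [cs.wordProd_cons, hprod, cs.wordProd_cons]
    · have hlt : ℓ (s i * π ξ) < ℓ (π ξ) := by rw [hprod]; omega
      obtain ⟨ξ', hsub', hlen', hprod'⟩ :=
        strong_exchange_left cs (cs.isReflection_simple i) hred hlt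
      refine ⟨ξ', hsub'.trans (hsub.trans (List.sublist_cons_self i ω)), ?_, ?_⟩
      · show ℓ (π ξ') = ξ'.length
        rw [hprod', hprod]
        have h1 : ℓ (π ξ) = ξ.length := hred
        rw [hprod] at h1
        omega
      · rw [hprod', hprod, cs.wordProd_cons]

/-- A Bruhat covering-type step: left multiplication by a reflection increasing length. -/
def BStep (y z : W) : Prop :=
  ∃ t : W, cs.IsReflection t ∧ z = t * y ∧ cs.length y < cs.length z

/-- The Bruhat order, defined via chains of reflection steps. -/
def BLE : W → W → Prop := Relation.ReflTransGen (BStep cs)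

lemma bstep_simple_mul {y : W} (i : B) (h : ℓ y < ℓ (s i * y)) :
    BStep cs y (s i * y) :=
  ⟨s i, cs.isReflection_simple i, rfl, h⟩

lemma ble_length_le {y w : W} (h : BLE cs y w) : ℓ y ≤ ℓ w := by
  induction h with
  | refl => exact le_rfl
  | tail h1 h2 ih =>
    obtain ⟨t, _, rfl, hlen⟩ := h2
    omega

lemma ble_one {y : W} (h : BLE cs y 1) : y = 1 := by
  have h1 := ble_length_le cs h
  rw [cs.length_one] at h1
  exact cs.length_eq_zero_iff.mp (Nat.le_zero.mp h1)

/-- The subword property: if `y ≤ w` then every reduced word for `w` has a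
reduced sublist representing `y`. -/
lemma exists_reduced_sublist_of_ble {y w : W} (h : BLE cs y w) :
    ∀ ψ : List B, cs.IsReduced ψ → π ψ = w →
      ∃ τ : List B, τ.Sublist ψ ∧ cs.IsReduced τ ∧ π τ = y := by
  have main : ∀ n : ℕ, ∀ y w : W, BLE cs y w → cs.length w = n →
      ∀ ψ : List B, cs.IsReduced ψ → π ψ = w →
        ∃ τ : List B, τ.Sublist ψ ∧ cs.IsReduced τ ∧ π τ = y := by
    intro n
    induction n using Nat.strong_induction_on with
    | _ n ih =>
    intro y w h hn ψ hψ hprod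
    rcases Relation.ReflTransGen.cases_tail h with rfl | ⟨v, hyv, hstep⟩
    · exact ⟨ψ, List.Sublist.refl ψ, hψ, hprod⟩
    · obtain ⟨t, ht, rfl, hlen⟩ := hstep
      have hv : t * π ψ = v := by
        rw [hprod, ← mul_assoc, ht.mul_self, one_mul]
      have hlt : ℓ (t * π ψ) < ℓ (π ψ) := by rw [hv, hprod]; omega
      obtain ⟨ξ, hsub, hlenξ, hprodξ⟩ := strong_exchange_left cs ht hψ hlt
      obtain ⟨ξ', hsub', hred', hprod'⟩ := exists_reduced_sublist cs ξ
      have hξv : π ξ' = v := by rw [hprod', hprodξ, hv]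
      obtain ⟨τ, hτsub, hτred, hτprod⟩ :=
        ih (ℓ v) (by omega) y v hyv rfl ξ' hred' hξv
      exact ⟨τ, hτsub.trans (hsub'.trans hsub), hτred, hτprod⟩
  exact main (cs.length w) y w h rfl

/-- `T n`: a reduced sublist of a reduced word of length `n` is Bruhat-below it. -/
def Tprop (n : ℕ) : Prop :=
  ∀ ψ τ : List B, ψ.length = n → cs.IsReduced ψ → τ.Sublist ψ → cs.IsReduced τ →
    BLE cs (cs.wordProd τ) (cs.wordProd ψ)

/-- `L n`: a lifting property for the Bruhat order. -/
def Lprop (n : ℕ) : Prop :=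
  ∀ (v v' : W) (i : B), BLE cs v v' → cs.length v' = n →
    cs.length (cs.simple i * v) = cs.length v + 1 →
    cs.length (cs.simple i * v') < cs.length v' →
    BLE cs (cs.simple i * v) v'

lemma zcomp {N : ℕ} (hL : ∀ k, k < N → Lprop cs k) {u w : W} (i : B)
    (h : BLE cs u w) (hwN : ℓ w < N) (hup : ℓ (s i * w) = ℓ w + 1) :
    BLE cs (s i * u) (s i * w) := by
  induction h with
  | refl => exact Relation.ReflTransGen.refl
  | @tail b c hsub hstep ih =>
    obtain ⟨t, ht, rfl, hlen⟩ := hstep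
    have hbN : ℓ b < N := by omega
    rcases cs.length_simple_mul b i with hb | hb
    · -- middle goes up
      have h1 := ih hbN hb
      refine h1.tail ?_
      refine ⟨s i * t * (s i)⁻¹, ht.conj (s i), ?_, ?_⟩
      · rw [cs.inv_simple]
        simp [mul_assoc, cs.simple_mul_simple_cancel_left]
      · omega
    · -- middle goes down: ℓ (s i * b) + 1 = ℓ b
      rcases cs.length_simple_mul u i with hu | hu
      · -- u goes up : use the lifting property at level ℓ b
        have h2 : BLE cs (s i * u) b :=
          hL (ℓ b) hbN u b i hsub rfl hu (by omega)
        refine (h2.tail ⟨t, ht, rfl, hlen⟩).tail ?_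
        exact bstep_simple_mul cs i (by omega)
      · -- u goes down : s i * u ≤ u ≤ b ≤ t * b ≤ s i * (t * b)
        have h0 : BLE cs (s i * u) u := by
          refine Relation.ReflTransGen.single ?_
          have hfix : u = s i * (s i * u) := by
            rw [cs.simple_mul_simple_cancel_left]
          refine ⟨s i, cs.isReflection_simple i, hfix, by omega⟩
        refine ((h0.trans hsub).tail ⟨t, ht, rfl, hlen⟩).tail ?_
        exact bstep_simple_mul cs i (by omega)

lemma main_TL : ∀ n : ℕ, Tprop cs n ∧ Lprop cs n := by
  intro n
  induction n using Nat.strong_induction_on with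
  | _ n ih =>
  have hT : Tprop cs n := by
    intro ψ τ hlen hψ hsub hτ
    cases ψ with
    | nil =>
      have : τ = [] := List.sublist_nil.mp hsub
      subst this
      exact Relation.ReflTransGen.refl
    | cons β ψ₁ =>
      have hn : ψ₁.length + 1 = n := by simpa using hlen
      have hψ₁ : cs.IsReduced ψ₁ := isReduced_tail cs hψ
      have hlenψ : ℓ (π (β :: ψ₁)) = ψ₁.length + 1 := by
        rw [hψ]; simp
      have hlenψ₁ : ℓ (π ψ₁) = ψ₁.length := hψ₁
      cases hsub with
      | cons _ h =>
        -- τ is a sublist of ψ₁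
        have h1 : BLE cs (π τ) (π ψ₁) :=
          (ih ψ₁.length (by omega)).1 ψ₁ τ rfl hψ₁ h hτ
        refine h1.tail ?_
        refine ⟨s β, cs.isReflection_simple β, (cs.wordProd_cons β ψ₁), ?_⟩
        omega
      | cons_cons _ h =>
        -- τ = β :: τ₁ with τ₁ <+ ψ₁
        rename_i τ₁
        have hτ₁ : cs.IsReduced τ₁ := isReduced_tail cs hτ
        have h1 : BLE cs (π τ₁) (π ψ₁) :=
          (ih ψ₁.length (by omega)).1 ψ₁ τ₁ rfl hψ₁ h hτ₁
        have hup₁ : ℓ (s β * π τ₁) = ℓ (π τ₁) + 1 := by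
          have h2 : ℓ (π (β :: τ₁)) = τ₁.length + 1 := by
            rw [hτ]; simp
          rw [cs.wordProd_cons] at h2
          rw [h2, hτ₁]
        have hupψ : ℓ (s β * π ψ₁) = ℓ (π ψ₁) + 1 := by
          rw [← cs.wordProd_cons, hlenψ, hlenψ₁]
        have h3 := zcomp cs (N := n) (fun k hk => (ih k hk).2) β h1
          (by omega) hupψ
        rw [cs.wordProd_cons, cs.wordProd_cons]
        exact h3
  refine ⟨hT, ?_⟩
  intro v v' i hble hn hup hdown
  obtain ⟨φ₁, hφred, hφ⟩ := cs.exists_reduced_word' (s i * v')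
  have hπψ : π (i :: φ₁) = v' := by
    rw [cs.wordProd_cons, ← hφ, cs.simple_mul_simple_cancel_left]
  have hlenv' : ℓ (s i * v') + 1 = ℓ v' := by
    rcases cs.length_simple_mul v' i with h | h
    · omega
    · omega
  have hψred : cs.IsReduced (i :: φ₁) := by
    show ℓ (π (i :: φ₁)) = (i :: φ₁).length
    rw [hπψ, List.length_cons, ← hφred, ← hφ]
    omega
  obtain ⟨τ, hτsub, hτred, hτprod⟩ :=
    exists_reduced_sublist_of_ble cs hble (i :: φ₁) hψred hπψ
  cases hτsub with
  | cons _ hsub =>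
    -- τ <+ φ₁
    have hred2 : cs.IsReduced (i :: τ) := by
      show ℓ (π (i :: τ)) = (i :: τ).length
      rw [cs.wordProd_cons, hτprod, hup, List.length_cons]
      have hτlen : ℓ v = τ.length := by rw [← hτprod]; exact hτred
      omega
    have hlen2 : (i :: φ₁).length = n := by
      have : ℓ (π (i :: φ₁)) = (i :: φ₁).length := hψred
      rw [hπψ, hn] at this
      omega
    have h4 := hT (i :: φ₁) (i :: τ) hlen2 hψred (hsub.cons₂ i) hred2
    rw [hπψ, cs.wordProd_cons, hτprod] at h4
    exact h4
  | cons_cons _ hsub =>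
    -- τ = i :: τ₁, contradiction
    rename_i τ₁
    exfalso
    have h5 : ℓ (π (i :: τ₁)) = (i :: τ₁).length := hτred
    rw [hτprod, List.length_cons] at h5
    have h6 : π τ₁ = s i * v := by
      have h8 := cs.wordProd_cons i τ₁
      rw [hτprod] at h8
      rw [h8, cs.simple_mul_simple_cancel_left]
    have h7 : ℓ (s i * v) ≤ τ₁.length := by
      rw [← h6]; exact cs.length_wordProd_le τ₁
    omega

end QSC


-- Part 3: subword products indexed by finsets, left positivity, main theorem
namespace QSC

variable {B W : Type*} [Group W] {M : CoxeterMatrix B} (cs : CoxeterSystem M W)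

local prefix:100 "s" => cs.simple
local prefix:100 "π" => cs.wordProd
local prefix:100 "ℓ" => cs.length

/-- The product (in increasing order of `k`) of the simple reflections `s_{α_k}` over the
1-based indices `k ∈ D` with `k > j`, where `ω = (α_1, …, α_l)`; i.e. `w(i)^D_{>j}`. -/
def prodGT (ω : List B) (D : Finset ℕ) (j : ℕ) : W :=
  cs.wordProd ((((List.range ω.length).zip ω).filter fun p => decide (p.1 + 1 ∈ D ∧ j < p.1 + 1)).map Prod.snd)

/-- The product (in increasing order of `k`) of the simple reflections `s_{α_k}` over the
1-based indices `k ∈ D` with `k ≤ j`; i.e. `w(i)^D_{≤j}`. -/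
def prodLE (ω : List B) (D : Finset ℕ) (j : ℕ) : W :=
  cs.wordProd ((((List.range ω.length).zip ω).filter fun p => decide (p.1 + 1 ∈ D ∧ p.1 + 1 ≤ j)).map Prod.snd)

/-- `w(i)^D`, the total product of the subword of `ω` indexed by `D`. -/
def subwordProd (ω : List B) (D : Finset ℕ) : W := prodGT cs ω D 0

/-- `ω` is a reduced word for `w`. -/
def IsReducedWordFor (ω : List B) (w : W) : Prop := cs.wordProd ω = w ∧ cs.IsReduced ω

/-- `D` is a left positive subset of `{1, …, l}` for `ω`:
`ℓ(s_{α_j} ⬝ w(i)^D_{>j}) = ℓ(w(i)^D_{>j}) + 1` for all `j ∈ {1, …, l-1}`.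
Here the 1-based index `j` corresponds to the 0-based index `j - 1` into `ω`,
so below the 1-based index is `(j : ℕ) + 1` for `j : Fin ω.length`. -/
def LeftPositive (ω : List B) (D : Finset ℕ) : Prop :=
  ∀ j : Fin ω.length, (j : ℕ) + 1 < ω.length →
    cs.length (cs.simple (ω.get j) * prodGT cs ω D ((j : ℕ) + 1)) =
      cs.length (prodGT cs ω D ((j : ℕ) + 1)) + 1

/-- `D` is a right positive subset of `{1, …, l}` for `ω`:
`ℓ(w(i)^D_{≤j} ⬝ s_{α_{j+1}}) = ℓ(w(i)^D_{≤j}) + 1` for all `j ∈ {1, …, l-1}`.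
Here the letter `α_{j+1}` sits at 0-based index `j` of `ω`. -/
def RightPositive (ω : List B) (D : Finset ℕ) : Prop :=
  ∀ j : Fin ω.length, 0 < (j : ℕ) →
    cs.length (prodLE cs ω D (j : ℕ) * cs.simple (ω.get j)) =
      cs.length (prodLE cs ω D (j : ℕ)) + 1

/-- The strong Bruhat order on `W`, characterized by the subword property:
`y ≤ w` iff some reduced word for `w` has a subword that is a reduced word for `y`. -/
def BruhatLE (y w : W) : Prop :=
  ∃ ω : List B, IsReducedWordFor cs ω w ∧
    ∃ ω' : List B, ω'.Sublist ω ∧ IsReducedWordFor cs ω' y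


/-- The sublist of `ω` selected by a boolean predicate on (0-based) positions. -/
def selList : List B → (ℕ → Bool) → List B
  | [], _ => []
  | β :: ω, f => (if f 0 then [β] else []) ++ selList ω (fun n => f (n + 1))

lemma selList_congr : ∀ (ω : List B) {f g : ℕ → Bool}, (∀ n, f n = g n) →
    selList ω f = selList ω g
  | [], _, _, _ => rfl
  | β :: ω, f, g, h => by
    simp only [selList, h 0]
    rw [selList_congr ω (fun n => h (n + 1))]

lemma selList_aux (f : ℕ → Bool) : ∀ (ω : List B) (n : ℕ),
    ((((List.range' n ω.length).zip ω)).filter fun p => f p.1).map Prod.snd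
      = selList ω (fun k => f (n + k)) := by
  intro ω
  induction ω with
  | nil => intro n; rfl
  | cons β ω ih =>
    intro n
    have h1 : (List.range' n (β :: ω).length).zip (β :: ω) = (n, β) :: (List.range' (n + 1) ω.length).zip ω := rfl
    rw [h1, List.filter_cons]
    have h2 : selList (β :: ω) (fun k => f (n + k))
        = (if f n then [β] else []) ++ selList ω (fun k => f (n + (k + 1))) := by
      simp only [selList, Nat.add_zero]
    rw [h2]
    have h3 : selList ω (fun k => f (n + (k + 1))) = selList ω (fun k => f ((n + 1) + k)) :=
      selList_congr ω (fun k => by rw [show n + (k + 1) = (n + 1) + k by omega])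
    rw [h3, ← ih (n + 1)]
    by_cases h : f n = true <;> simp [h]

lemma selList_eq (ω : List B) (f : ℕ → Bool) :
    ((((List.range ω.length).zip ω).filter fun p => f p.1).map Prod.snd) = selList ω f := by
  have h := selList_aux f ω 0
  have h2 : List.range ω.length = List.range' 0 ω.length := List.range_eq_range' ..
  rw [h2, h]
  exact selList_congr ω (fun n => by rw [Nat.zero_add])

lemma prodGT_eq_selList (ω : List B) (D : Finset ℕ) (j : ℕ) :
    prodGT cs ω D j = π (selList ω (fun m => decide (m + 1 ∈ D ∧ j < m + 1))) := by
  unfold prodGT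
  exact congrArg cs.wordProd (selList_eq ω (fun m => decide (m + 1 ∈ D ∧ j < m + 1)))

/-- The shifted tail of an index set. -/
def Dtail (D : Finset ℕ) : Finset ℕ := (D.filter (fun d => 2 ≤ d)).image (· - 1)

lemma mem_Dtail {D : Finset ℕ} {k : ℕ} : k ∈ Dtail D ↔ k + 1 ∈ D ∧ 1 ≤ k := by
  unfold Dtail
  simp only [Finset.mem_image, Finset.mem_filter]
  constructor
  · rintro ⟨d, ⟨hd, h2⟩, rfl⟩
    constructor
    · have : d - 1 + 1 = d := by omega
      rwa [this]
    · omega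
  · rintro ⟨h1, h2⟩
    exact ⟨k + 1, ⟨h1, by omega⟩, by omega⟩

lemma prodGT_cons (β : B) (ω₁ : List B) (D : Finset ℕ) (j : ℕ) :
    prodGT cs (β :: ω₁) D j
      = (if 1 ∈ D ∧ j = 0 then s β else 1) * prodGT cs ω₁ (Dtail D) (j - 1) := by
  rw [prodGT_eq_selList, prodGT_eq_selList]
  have h1 : selList (β :: ω₁) (fun m => decide (m + 1 ∈ D ∧ j < m + 1))
      = (if decide (1 ∈ D ∧ j < 1) then [β] else [])
        ++ selList ω₁ (fun n => decide (n + 1 + 1 ∈ D ∧ j < n + 1 + 1)) := rfl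
  rw [h1, cs.wordProd_append]
  congr 1
  · by_cases h : 1 ∈ D ∧ j = 0
    · rw [if_pos h, if_pos (decide_eq_true (show 1 ∈ D ∧ j < 1 from ⟨h.1, by omega⟩))]
      exact cs.wordProd_singleton β
    · have hcond : ¬ (decide (1 ∈ D ∧ j < 1) = true) := by
        simp only [decide_eq_true_eq]
        intro hc
        exact h ⟨hc.1, by omega⟩
      rw [if_neg h, if_neg hcond, cs.wordProd_nil]
  · congr 1
    apply selList_congr
    intro n
    apply decide_eq_decide.mpr
    rw [mem_Dtail]
    constructor
    · rintro ⟨h1, h2⟩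
      exact ⟨⟨h1, by omega⟩, by omega⟩
    · rintro ⟨⟨h1, _⟩, h2⟩
      exact ⟨h1, by omega⟩

lemma subwordProd_nil (D : Finset ℕ) : subwordProd cs [] D = 1 := by
  simp [subwordProd, prodGT, cs.wordProd_nil]

lemma subwordProd_cons (β : B) (ω₁ : List B) (D : Finset ℕ) :
    subwordProd cs (β :: ω₁) D
      = (if 1 ∈ D then s β else 1) * subwordProd cs ω₁ (Dtail D) := by
  unfold subwordProd
  rw [prodGT_cons]
  congr 1
  by_cases h : 1 ∈ D
  · rw [if_pos h, if_pos ⟨h, rfl⟩]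
  · rw [if_neg h, if_neg (by tauto)]

lemma prodGT_cons_succ (β : B) (ω₁ : List B) (D : Finset ℕ) (k : ℕ) :
    prodGT cs (β :: ω₁) D (k + 1) = prodGT cs ω₁ (Dtail D) k := by
  rw [prodGT_cons, if_neg (by omega), one_mul]
  norm_num

lemma leftPositive_cons_iff (β : B) (ω₁ : List B) (D : Finset ℕ) :
    LeftPositive cs (β :: ω₁) D ↔
      ((0 < ω₁.length →
          ℓ (s β * subwordProd cs ω₁ (Dtail D))
            = ℓ (subwordProd cs ω₁ (Dtail D)) + 1)
        ∧ LeftPositive cs ω₁ (Dtail D)) := by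
  constructor
  · intro H
    constructor
    · intro h0
      have hj : (0 : ℕ) + 1 < (β :: ω₁).length := by
        simp only [List.length_cons]; omega
      have h5 := H ⟨0, by simp only [List.length_cons]; omega⟩ hj
      rwa [show ((⟨0, by simp only [List.length_cons]; omega⟩ :
          Fin (β :: ω₁).length) : ℕ) + 1 = 0 + 1 from rfl,
        prodGT_cons_succ, show (β :: ω₁).get ⟨0, by simp only [List.length_cons]; omega⟩
          = β from rfl] at h5
    · intro j hj
      have hjlt : (j : ℕ) + 1 < ω₁.length := hj
      have hj2 : ((j : ℕ) + 1) + 1 < (β :: ω₁).length := by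
        simp only [List.length_cons]; omega
      have hmem : (j : ℕ) + 1 < (β :: ω₁).length := by
        simp only [List.length_cons]; omega
      have h5 := H ⟨(j : ℕ) + 1, hmem⟩ hj2
      have hget : (β :: ω₁).get ⟨(j : ℕ) + 1, hmem⟩ = ω₁.get j := by
        simp [List.get]
      rw [hget] at h5
      rwa [show ((⟨(j : ℕ) + 1, hmem⟩ : Fin (β :: ω₁).length) : ℕ) + 1
          = ((j : ℕ) + 1) + 1 from rfl, prodGT_cons_succ] at h5
  · rintro ⟨h0, H⟩ j hj
    rcases j with ⟨jv, hjv⟩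
    cases jv with
    | zero =>
      have h1 : 0 < ω₁.length := by
        simp only [List.length_cons] at hj
        omega
      have := h0 h1
      show ℓ (s ((β :: ω₁).get ⟨0, hjv⟩) * prodGT cs (β :: ω₁) D (0 + 1))
          = ℓ (prodGT cs (β :: ω₁) D (0 + 1)) + 1
      rw [prodGT_cons_succ]
      exact this
    | succ k =>
      have hk : k < ω₁.length := by
        simp only [List.length_cons] at hjv
        omega
      have hklt : k + 1 < ω₁.length := by
        simp only [List.length_cons] at hj
        omega
      have := H ⟨k, hk⟩ hklt
      show ℓ (s ((β :: ω₁).get ⟨k + 1, hjv⟩) * prodGT cs (β :: ω₁) D (k + 1 + 1))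
          = ℓ (prodGT cs (β :: ω₁) D (k + 1 + 1)) + 1
      have hget : (β :: ω₁).get ⟨k + 1, hjv⟩ = ω₁.get ⟨k, hk⟩ := by
        simp [List.get]
      rw [hget, prodGT_cons_succ]
      exact this

lemma Dtail_subset {D : Finset ℕ} {n : ℕ} (h : D ⊆ Finset.Icc 1 (n + 1)) :
    Dtail D ⊆ Finset.Icc 1 n := by
  intro k hk
  rw [mem_Dtail] at hk
  have := h hk.1
  rw [Finset.mem_Icc] at this ⊢
  omega

lemma D_ext {D D' : Finset ℕ} {n : ℕ} (hD : D ⊆ Finset.Icc 1 n)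
    (hD' : D' ⊆ Finset.Icc 1 n) (h1 : (1 ∈ D) ↔ (1 ∈ D'))
    (ht : Dtail D = Dtail D') : D = D' := by
  ext d
  match d with
  | 0 =>
    constructor
    · intro h; have := hD h; rw [Finset.mem_Icc] at this; omega
    · intro h; have := hD' h; rw [Finset.mem_Icc] at this; omega
  | 1 => exact h1
  | (k + 2) =>
    have e1 : k + 2 ∈ D ↔ k + 1 ∈ Dtail D := by
      rw [mem_Dtail]; constructor
      · intro h; exact ⟨h, by omega⟩
      · intro h; exact h.1
    have e2 : k + 2 ∈ D' ↔ k + 1 ∈ Dtail D' := by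
      rw [mem_Dtail]; constructor
      · intro h; exact ⟨h, by omega⟩
      · intro h; exact h.1
    rw [e1, e2, ht]

/-- Extend an index set for the tail word by shifting, possibly adding position 1. -/
def Dcons (b : Bool) (D₁ : Finset ℕ) : Finset ℕ :=
  (D₁.image (· + 1)) ∪ (if b then {1} else ∅)

lemma mem_Dcons {b : Bool} {D₁ : Finset ℕ} {k : ℕ} :
    k ∈ Dcons b D₁ ↔ (∃ m ∈ D₁, m + 1 = k) ∨ (b ∧ k = 1) := by
  unfold Dcons
  simp only [Finset.mem_union, Finset.mem_image]
  constructor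
  · rintro (⟨m, hm, rfl⟩ | h)
    · exact Or.inl ⟨m, hm, rfl⟩
    · cases b
      · simp at h
      · simp at h; exact Or.inr ⟨rfl, h⟩
  · rintro (⟨m, hm, rfl⟩ | ⟨hb, rfl⟩)
    · exact Or.inl ⟨m, hm, rfl⟩
    · right; rw [hb]; simp

lemma one_mem_Dcons {b : Bool} {D₁ : Finset ℕ} {n : ℕ} (h : D₁ ⊆ Finset.Icc 1 n) :
    (1 ∈ Dcons b D₁) ↔ b = true := by
  rw [mem_Dcons]
  constructor
  · rintro (⟨m, hm, hmk⟩ | ⟨hb, _⟩)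
    · have := h hm; rw [Finset.mem_Icc] at this; omega
    · exact hb
  · intro hb; exact Or.inr ⟨hb, rfl⟩

lemma Dtail_Dcons {b : Bool} {D₁ : Finset ℕ} {n : ℕ} (h : D₁ ⊆ Finset.Icc 1 n) :
    Dtail (Dcons b D₁) = D₁ := by
  ext k
  rw [mem_Dtail, mem_Dcons]
  constructor
  · rintro ⟨(⟨m, hm, hmk⟩ | ⟨_, hk⟩), hk1⟩
    · have : m = k := by omega
      rwa [← this]
    · omega
  · intro hk
    have := h hk; rw [Finset.mem_Icc] at this
    exact ⟨Or.inl ⟨k, hk, rfl⟩, this.1⟩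

lemma Dcons_subset {b : Bool} {D₁ : Finset ℕ} {n : ℕ} (h : D₁ ⊆ Finset.Icc 1 n) :
    Dcons b D₁ ⊆ Finset.Icc 1 (n + 1) := by
  intro k hk
  rw [mem_Dcons] at hk
  rw [Finset.mem_Icc]
  rcases hk with ⟨m, hm, rfl⟩ | ⟨_, rfl⟩
  · have := h hm; rw [Finset.mem_Icc] at this; omega
  · omega

lemma ble_tail_up {β : B} {ω₁ : List B} {y : W} (hred : cs.IsReduced (β :: ω₁))
    (hy : BLE cs y (π (β :: ω₁))) (hup : ℓ (s β * y) = ℓ y + 1) :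
    BLE cs y (π ω₁) := by
  obtain ⟨τ, hsub, hτred, hτprod⟩ :=
    exists_reduced_sublist_of_ble cs hy (β :: ω₁) hred rfl
  cases hsub with
  | cons _ h =>
    have := (main_TL cs ω₁.length).1 ω₁ τ rfl (isReduced_tail cs hred) h hτred
    rwa [hτprod] at this
  | cons_cons _ h =>
    rename_i τ₁
    exfalso
    have h5 : ℓ (π (β :: τ₁)) = (β :: τ₁).length := hτred
    rw [hτprod, List.length_cons] at h5
    have h6 : π τ₁ = s β * y := by
      have h8 := cs.wordProd_cons β τ₁
      rw [hτprod] at h8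
      rw [h8, cs.simple_mul_simple_cancel_left]
    have h7 : ℓ (s β * y) ≤ τ₁.length := by
      rw [← h6]; exact cs.length_wordProd_le τ₁
    omega

lemma ble_tail_down {β : B} {ω₁ : List B} {y : W} (hred : cs.IsReduced (β :: ω₁))
    (hy : BLE cs y (π (β :: ω₁))) (hdown : ℓ (s β * y) + 1 = ℓ y) :
    BLE cs (s β * y) (π ω₁) := by
  obtain ⟨τ, hsub, hτred, hτprod⟩ :=
    exists_reduced_sublist_of_ble cs hy (β :: ω₁) hred rfl
  cases hsub with
  | cons _ h =>
    have h1 : BLE cs y (π ω₁) := by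
      have := (main_TL cs ω₁.length).1 ω₁ τ rfl (isReduced_tail cs hred) h hτred
      rwa [hτprod] at this
    refine Relation.ReflTransGen.trans ?_ h1
    refine Relation.ReflTransGen.single ?_
    refine ⟨s β, cs.isReflection_simple β, ?_, by omega⟩
    rw [cs.simple_mul_simple_cancel_left]
  | cons_cons _ h =>
    rename_i τ₁
    have h6 : π τ₁ = s β * y := by
      have h8 := cs.wordProd_cons β τ₁
      rw [hτprod] at h8
      rw [h8, cs.simple_mul_simple_cancel_left]
    have := (main_TL cs ω₁.length).1 ω₁ τ₁ rfl (isReduced_tail cs hred) h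
      (isReduced_tail cs hτred)
    rwa [h6] at this

/-- The main inductive statement. -/
theorem main_exists_unique (ω : List B) : ∀ y : W, cs.IsReduced ω → BLE cs y (π ω) →
    ∃! D : Finset ℕ, D ⊆ Finset.Icc 1 ω.length ∧ LeftPositive cs ω D ∧
      subwordProd cs ω D = y := by
  induction ω with
  | nil =>
    intro y _ hy
    have hy1 : y = 1 := by
      have h1 : π ([] : List B) = 1 := cs.wordProd_nil
      rw [h1] at hy
      exact ble_one cs hy
    subst hy1
    refine ⟨∅, ⟨by simp, ?_, subwordProd_nil cs ∅⟩, ?_⟩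
    · intro j _
      exact absurd j.isLt (Nat.not_lt_zero _)
    · rintro D' ⟨hsub, _, _⟩
      have : Finset.Icc 1 ([] : List B).length = ∅ := by simp
      rw [this, Finset.subset_empty] at hsub
      exact hsub
  | cons β ω₁ ih =>
    intro y hred hy
    have hred₁ : cs.IsReduced ω₁ := isReduced_tail cs hred
    have hlω : ℓ (π (β :: ω₁)) = ω₁.length + 1 := by
      have h0 : ℓ (π (β :: ω₁)) = (β :: ω₁).length := hred
      rwa [List.length_cons] at h0
    have hlω₁ : ℓ (π ω₁) = ω₁.length := hred₁
    rcases cs.length_simple_mul y β with hup | hdown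
    · -- case 1 ∉ D
      have hble₁ : BLE cs y (π ω₁) := ble_tail_up cs hred hy hup
      obtain ⟨D₁, ⟨hsub₁, hLP₁, hprod₁⟩, huniq₁⟩ := ih y hred₁ hble₁
      refine ⟨Dcons false D₁, ⟨?_, ?_, ?_⟩, ?_⟩
      · rw [List.length_cons]
        exact Dcons_subset hsub₁
      · rw [leftPositive_cons_iff, Dtail_Dcons hsub₁, hprod₁]
        exact ⟨fun _ => hup, hLP₁⟩
      · rw [subwordProd_cons, Dtail_Dcons hsub₁, hprod₁,
          if_neg (by rw [one_mem_Dcons hsub₁]; simp), one_mul]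
      · rintro D' ⟨hsub', hLP', hprod'⟩
        rw [List.length_cons] at hsub'
        obtain ⟨hcond1', hLP₁'⟩ := (leftPositive_cons_iff cs β ω₁ D').mp hLP'
        have hy₁up : ℓ (s β * subwordProd cs ω₁ (Dtail D'))
            = ℓ (subwordProd cs ω₁ (Dtail D')) + 1 := by
          rcases Nat.eq_zero_or_pos ω₁.length with h0 | h0
          · have hω₁nil : ω₁ = [] := List.length_eq_zero_iff.mp h0
            rw [hω₁nil, subwordProd_nil, mul_one, cs.length_one, cs.length_simple]
          · exact hcond1' h0
        have h1D' : 1 ∉ D' := by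
          intro h1
          rw [subwordProd_cons, if_pos h1] at hprod'
          have hy2 : s β * y = subwordProd cs ω₁ (Dtail D') := by
            rw [← hprod', ← mul_assoc, cs.simple_mul_simple_self, one_mul]
          have e1 : ℓ (subwordProd cs ω₁ (Dtail D')) = ℓ y + 1 := by
            rw [← hy2]; exact hup
          have e2 : ℓ y = ℓ (subwordProd cs ω₁ (Dtail D')) + 1 := by
            rw [← hprod', hy₁up]
          omega
        rw [subwordProd_cons, if_neg h1D', one_mul] at hprod'
        have hDt : Dtail D' = D₁ :=
          huniq₁ (Dtail D') ⟨Dtail_subset hsub', hLP₁', hprod'⟩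
        refine D_ext (n := ω₁.length + 1) hsub' (Dcons_subset hsub₁) ?_ ?_
        · exact iff_of_false h1D' (by rw [one_mem_Dcons hsub₁]; simp)
        · rw [Dtail_Dcons hsub₁, hDt]
    · -- case 1 ∈ D
      have hble₁ : BLE cs (s β * y) (π ω₁) := ble_tail_down cs hred hy hdown
      obtain ⟨D₁, ⟨hsub₁, hLP₁, hprod₁⟩, huniq₁⟩ := ih (s β * y) hred₁ hble₁
      refine ⟨Dcons true D₁, ⟨?_, ?_, ?_⟩, ?_⟩
      · rw [List.length_cons]
        exact Dcons_subset hsub₁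
      · rw [leftPositive_cons_iff, Dtail_Dcons hsub₁, hprod₁]
        refine ⟨fun _ => ?_, hLP₁⟩
        rw [cs.simple_mul_simple_cancel_left]
        omega
      · rw [subwordProd_cons, Dtail_Dcons hsub₁, hprod₁,
          if_pos ((one_mem_Dcons hsub₁).mpr rfl), cs.simple_mul_simple_cancel_left]
      · rintro D' ⟨hsub', hLP', hprod'⟩
        rw [List.length_cons] at hsub'
        obtain ⟨hcond1', hLP₁'⟩ := (leftPositive_cons_iff cs β ω₁ D').mp hLP'
        have hy₁up : ℓ (s β * subwordProd cs ω₁ (Dtail D'))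
            = ℓ (subwordProd cs ω₁ (Dtail D')) + 1 := by
          rcases Nat.eq_zero_or_pos ω₁.length with h0 | h0
          · have hω₁nil : ω₁ = [] := List.length_eq_zero_iff.mp h0
            rw [hω₁nil, subwordProd_nil, mul_one, cs.length_one, cs.length_simple]
          · exact hcond1' h0
        have h1D' : 1 ∈ D' := by
          by_contra h1
          rw [subwordProd_cons, if_neg h1, one_mul] at hprod'
          rw [hprod'] at hy₁up
          omega
        rw [subwordProd_cons, if_pos h1D'] at hprod'
        have hprod'' : subwordProd cs ω₁ (Dtail D') = s β * y := by
          rw [← hprod', ← mul_assoc, cs.simple_mul_simple_self, one_mul]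
        have hDt : Dtail D' = D₁ :=
          huniq₁ (Dtail D') ⟨Dtail_subset hsub', hLP₁', hprod''⟩
        refine D_ext (n := ω₁.length + 1) hsub' (Dcons_subset hsub₁) ?_ ?_
        · exact iff_of_true h1D' ((one_mem_Dcons hsub₁).mpr rfl)
        · rw [Dtail_Dcons hsub₁, hDt]


theorem statement1 (w y : W) (ω : List B) (hred : IsReducedWordFor cs ω w)
    (hy : BruhatLE cs y w) :
    ∃! D : Finset ℕ, D ⊆ Finset.Icc 1 ω.length ∧ LeftPositive cs ω D ∧
      subwordProd cs ω D = y := by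
  obtain ⟨hprod, hredw⟩ := hred
  obtain ⟨ω0, hred0, ω0', hsub0, hred0'⟩ := hy
  have hble : BLE cs y w := by
    have h := (main_TL cs ω0.length).1 ω0 ω0' rfl hred0.2 hsub0 hred0'.2
    rwa [hred0.1, hred0'.1] at h
  rw [← hprod] at hble
  exact main_exists_unique cs ω y hredw hble

end QSC
end

section
/- Let K be a field, A an associative unital K-algebra, and q ∈ K^×. Let x be a regular element of A (neither a left nor a right zero divisor), and suppose there exist K-linear maps σ, δ : A → A such that σ is locally finite, δ is locally nilpotent, σ∘δ = q·(δ∘σ), and x·a = σ(a)·x + δ(a) for all a ∈ A. Then the multiplicative set Ω = { x^n : n ∈ ℕ } is a two-sided Ore set in A, i.e., it satisfies both the left and the right Ore conditions. -/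
/-- Let `K` be a field, `A` an associative unital `K`-algebra, `q ∈ K^×`,
and `x ∈ A` a regular element (neither a left nor a right zero divisor). Suppose there are
`K`-linear maps `σ, δ : A → A` with `σ` locally finite, `δ` locally nilpotent,
`σ ∘ δ = q ⬝ (δ ∘ σ)`, and `x ⬝ a = σ(a) ⬝ x + δ(a)` for all `a ∈ A`. Then the multiplicative
set `Ω = {xⁿ : n ∈ ℕ}` is a two-sided Ore set in `A`: it satisfies both the left Ore
condition and the right Ore condition. -/
theorem statement10 {K : Type*} [Field K] {A : Type*} [Ring A] [Algebra K A]
    (q : K) (hq : q ≠ 0) (x : A)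
    (hreg_left : ∀ a : A, x * a = 0 → a = 0)
    (hreg_right : ∀ a : A, a * x = 0 → a = 0)
    (σ δ : A →ₗ[K] A)
    (hσfin : ∀ a : A, ∃ V : Submodule K A,
      FiniteDimensional K V ∧ (∀ v ∈ V, σ v ∈ V) ∧ a ∈ V)
    (hδnil : ∀ a : A, ∃ n : ℕ, (δ ^ n) a = 0)
    (hcomm : σ ∘ₗ δ = q • (δ ∘ₗ σ))
    (hskew : ∀ a : A, x * a = σ a * x + δ a) :
    (∀ (a : A) (n : ℕ), ∃ (a' : A) (n' : ℕ), x ^ n' * a = a' * x ^ n) ∧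
    (∀ (a : A) (n : ℕ), ∃ (a'' : A) (n'' : ℕ), a * x ^ n'' = x ^ n * a'') := by
  
  classical
  -- pointwise form of the commutation relation
  have hcd : ∀ v : A, σ (δ v) = q • δ (σ v) := by
    intro v
    have h := LinearMap.congr_fun hcomm v
    simpa using h
  -- powers of x are left-regular
  have hregpow : ∀ (n : ℕ) (a : A), x ^ n * a = 0 → a = 0 := by
    intro n
    induction n with
    | zero => intro a h; simpa using h
    | succ n ih =>
      intro a h
      have h' : x ^ n * (x * a) = 0 := by
        rw [← mul_assoc, ← pow_succ, h]
      exact hreg_left a (ih _ h')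
  -- σ is injective
  have hσinj : Function.Injective σ := by
    have key : ∀ c : A, σ c = 0 → c = 0 := by
      intro c hc
      have h1 : ∀ k : ℕ, σ ((δ ^ k) c) = 0 := by
        intro k
        induction k with
        | zero => simpa using hc
        | succ k ih =>
          have : (δ ^ (k + 1)) c = δ ((δ ^ k) c) := by
            rw [pow_succ']; rfl
          rw [this, hcd, ih, map_zero, smul_zero]
      have h2 : ∀ k : ℕ, x ^ k * c = (δ ^ k) c := by
        intro k
        induction k with
        | zero => simp
        | succ k ih =>
          have e1 : x ^ (k + 1) * c = x * (x ^ k * c) := by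
            rw [pow_succ', mul_assoc]
          rw [e1, ih, hskew, h1, zero_mul, zero_add]
          rw [pow_succ']; rfl
      obtain ⟨N, hN⟩ := hδnil c
      have : x ^ N * c = 0 := by rw [h2 N, hN]
      exact hregpow N c this
    intro a b hab
    have : σ (a - b) = 0 := by rw [map_sub, hab, sub_self]
    exact sub_eq_zero.mp (key _ this)
  -- on every finite-dimensional σ-stable subspace, σ is onto
  have hsurjV : ∀ V : Submodule K A, FiniteDimensional K V → (∀ v ∈ V, σ v ∈ V) →
      ∀ v ∈ V, ∃ w ∈ V, σ w = v := by
    intro V hfin hstab v hv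
    haveI := hfin
    set σ' : V →ₗ[K] V := σ.restrict (fun w hw => hstab w hw) with hσ'
    have hinj' : Function.Injective σ' := by
      intro ⟨a, ha⟩ ⟨b, hb⟩ h
      have : σ a = σ b := congrArg Subtype.val h
      exact Subtype.ext (hσinj this)
    have hsurj' : Function.Surjective σ' := LinearMap.injective_iff_surjective.mp hinj'
    obtain ⟨⟨w, hw⟩, hww⟩ := hsurj' ⟨v, hv⟩
    exact ⟨w, hw, congrArg Subtype.val hww⟩
  have hσsurj : Function.Surjective σ := by
    intro a
    obtain ⟨V, hfin, hstab, haV⟩ := hσfin a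
    obtain ⟨w, _, hw⟩ := hsurjV V hfin hstab a haV
    exact ⟨w, hw⟩
  -- the inverse of σ
  let e : A ≃ₗ[K] A := LinearEquiv.ofBijective σ ⟨hσinj, hσsurj⟩
  set τ : A → A := fun v => e.symm v with hτ
  have hστ : ∀ v : A, σ (τ v) = v := by
    intro v
    have h := e.apply_symm_apply v
    rwa [show e (e.symm v) = σ (e.symm v) from rfl] at h
  have hτmem : ∀ V : Submodule K A, FiniteDimensional K V → (∀ v ∈ V, σ v ∈ V) →
      ∀ v ∈ V, τ v ∈ V := by
    intro V hfin hstab v hv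
    obtain ⟨w, hwV, hw⟩ := hsurjV V hfin hstab v hv
    have : τ v = w := hσinj (by rw [hστ, hw])
    rwa [this]
  have hτsmul : ∀ (c : K) (v : A), τ (c • v) = c • τ v := fun c v => map_smul e.symm c v
  -- τ commutes with δ up to q⁻¹
  have hτδ : ∀ v : A, τ (δ v) = q⁻¹ • δ (τ v) := by
    intro v
    apply hσinj
    rw [hστ, map_smul, hcd, hστ, smul_smul, inv_mul_cancel₀ hq, one_smul]
  have hτδk : ∀ (k : ℕ) (v : A), τ ((δ ^ k) v) = (q⁻¹) ^ k • (δ ^ k) (τ v) := by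
    intro k
    induction k with
    | zero => intro v; simp
    | succ k ih =>
      intro v
      have e1 : (δ ^ (k + 1)) v = δ ((δ ^ k) v) := by rw [pow_succ']; rfl
      have e2 : (δ ^ (k + 1)) (τ v) = δ ((δ ^ k) (τ v)) := by rw [pow_succ']; rfl
      rw [e1, hτδ, ih, map_smul, e2, smul_smul, ← pow_succ']
  -- uniform nilpotency of δ on finite-dimensional subspaces
  choose f hf using hδnil
  have hunif : ∀ V : Submodule K A, FiniteDimensional K V → ∃ N : ℕ, ∀ v ∈ V, (δ ^ N) v = 0 := by
    intro V hfin
    haveI := hfin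
    obtain ⟨s, hs⟩ := Module.Finite.iff_fg.mp hfin
    refine ⟨s.sup f, ?_⟩
    have hle : V ≤ LinearMap.ker (δ ^ s.sup f) := by
      rw [← hs, Submodule.span_le]
      intro g hg
      have hgs : g ∈ s := hg
      have hfg : f g ≤ s.sup f := Finset.le_sup hgs
      have : (δ ^ s.sup f) g = (δ ^ (s.sup f - f g)) ((δ ^ f g) g) := by
        rw [← Module.End.mul_apply, ← pow_add, Nat.sub_add_cancel hfg]
      simp only [SetLike.mem_coe, LinearMap.mem_ker, this, hf g, map_zero]
    intro v hv
    exact hle hv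
  -- LEFT ORE
  have left1 : ∀ (a : A) (k : ℕ), ∃ b : A, x ^ k * a = b * x + (δ ^ k) a := by
    intro a k
    induction k with
    | zero => exact ⟨0, by simp⟩
    | succ k ih =>
      obtain ⟨b, hb⟩ := ih
      refine ⟨x * b + σ ((δ ^ k) a), ?_⟩
      have e1 : x ^ (k + 1) * a = x * (x ^ k * a) := by rw [pow_succ', mul_assoc]
      have e2 : (δ ^ (k + 1)) a = δ ((δ ^ k) a) := by rw [pow_succ']; rfl
      rw [e1, hb, mul_add, hskew ((δ ^ k) a), ← mul_assoc, e2, add_mul, add_assoc]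
  have left2 : ∀ a : A, ∃ (m : ℕ) (b : A), x ^ m * a = b * x := by
    intro a
    obtain ⟨b, hb⟩ := left1 a (f a)
    exact ⟨f a, b, by rw [hb, hf a, add_zero]⟩
  have leftOre : ∀ (n : ℕ) (a : A), ∃ (m : ℕ) (b : A), x ^ m * a = b * x ^ n := by
    intro n
    induction n with
    | zero => intro a; exact ⟨0, a, by simp⟩
    | succ n ih =>
      intro a
      obtain ⟨m, b, hb⟩ := ih a
      obtain ⟨m', b', hb'⟩ := left2 b
      refine ⟨m' + m, b', ?_⟩
      calc x ^ (m' + m) * a = x ^ m' * (x ^ m * a) := by rw [pow_add, mul_assoc]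
        _ = (x ^ m' * b) * x ^ n := by rw [hb, mul_assoc]
        _ = (b' * x) * x ^ n := by rw [hb']
        _ = b' * x ^ (n + 1) := by rw [mul_assoc, ← pow_succ']
  -- RIGHT ORE
  have right1 : ∀ (a : A) (k : ℕ), ∃ (b : A) (c : K), c ≠ 0 ∧
      a * x ^ k = x * b + c • (δ ^ k) (τ^[k] a) := by
    intro a k
    induction k with
    | zero => exact ⟨0, 1, one_ne_zero, by simp⟩
    | succ k ih =>
      obtain ⟨b, c, hc0, hb⟩ := ih
      set w : A := τ^[k] a with hw
      set u : A := τ ((δ ^ k) w) with hu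
      have hux : (δ ^ k) w * x = x * u - δ u := by
        have h := hskew u
        rw [hστ] at h
        exact eq_sub_of_add_eq h.symm
      have hdu : δ u = (q⁻¹) ^ k • (δ ^ (k + 1)) (τ^[k + 1] a) := by
        rw [hu, hτδk, map_smul]
        congr 1
        rw [Function.iterate_succ_apply', ← hw, pow_succ']
        rfl
      refine ⟨b * x + c • u, -c * (q⁻¹) ^ k, ?_, ?_⟩
      · exact mul_ne_zero (neg_ne_zero.mpr hc0) (pow_ne_zero _ (inv_ne_zero hq))
      · calc a * x ^ (k + 1) = (a * x ^ k) * x := by rw [pow_succ, mul_assoc]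
          _ = (x * b + c • (δ ^ k) w) * x := by rw [hb]
          _ = x * (b * x) + c • ((δ ^ k) w * x) := by rw [add_mul, mul_assoc, smul_mul_assoc]
          _ = x * (b * x) + (x * (c • u) - c • δ u) := by
              rw [hux, smul_sub, mul_smul_comm]
          _ = x * (b * x + c • u) + (-c) • δ u := by
              rw [mul_add, neg_smul]; abel
          _ = x * (b * x + c • u) + (-c * (q⁻¹) ^ k) • (δ ^ (k + 1)) (τ^[k + 1] a) := by
              rw [hdu, smul_smul]
  have right2 : ∀ a : A, ∃ (m : ℕ) (b : A), a * x ^ m = x * b := by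
    intro a
    obtain ⟨V, hfin, hstab, haV⟩ := hσfin a
    obtain ⟨N, hN⟩ := hunif V hfin
    have hiter : ∀ k : ℕ, τ^[k] a ∈ V := by
      intro k
      induction k with
      | zero => simpa using haV
      | succ k ih =>
        rw [Function.iterate_succ_apply']
        exact hτmem V hfin hstab _ ih
    obtain ⟨b, c, hc0, hb⟩ := right1 a N
    refine ⟨N, b, ?_⟩
    rw [hb, hN _ (hiter N), smul_zero, add_zero]
  have rightOre : ∀ (n : ℕ) (a : A), ∃ (m : ℕ) (b : A), a * x ^ m = x ^ n * b := by
    intro n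
    induction n with
    | zero => intro a; exact ⟨0, a, by simp⟩
    | succ n ih =>
      intro a
      obtain ⟨m, b, hb⟩ := ih a
      obtain ⟨m', b', hb'⟩ := right2 b
      refine ⟨m + m', b', ?_⟩
      calc a * x ^ (m + m') = (a * x ^ m) * x ^ m' := by rw [pow_add, mul_assoc]
        _ = x ^ n * (b * x ^ m') := by rw [hb, mul_assoc]
        _ = x ^ n * (x * b') := by rw [hb']
        _ = x ^ (n + 1) * b' := by rw [← mul_assoc, ← pow_succ]
  exact ⟨fun a n => by obtain ⟨m, b, h⟩ := leftOre n a; exact ⟨b, m, h⟩,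
    fun a n => by obtain ⟨m, b, h⟩ := rightOre n a; exact ⟨b, m, h⟩⟩
end
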